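/- arXiv:1908.03714 — 2 statements merged into one kernel-verified Lean document; each statement's English description precedes it below -/
import Mathlib

section
/- Let c₁, c₂, a₁₁, a₁₂, a₂₁, a₂₂ be positive integers. Then the graph Γ(c₁, c₂; a) is move equivalent via the moves (O) and (R+) to the graph with adjacency matrix [[0, c₁, c₂+c₁+1], [0, a₁₁, a₁₂+a₁₁−1], [0, a₂₁, a₂₂+a₂₁]] (vertices listed as u, v₁, v₂). -/
open Classical

/-- A graph in the sense of graph C*-algebras: finitely many vertices,
countably many edges, with source and range maps. -/
structure CKGraph where
  V : Type
  E : Type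
  finV : Finite V
  cntE : Countable E
  s : E → V
  r : E → V

attribute [instance] CKGraph.finV CKGraph.cntE

namespace CKGraph

/-- Isomorphism of graphs: bijections on vertices and edges intertwining
the source and range maps. -/
def Iso (G H : CKGraph) : Prop :=
  ∃ (f : G.V ≃ H.V) (g : G.E ≃ H.E),
    (∀ e, H.s (g e) = f (G.s e)) ∧ (∀ e, H.r (g e) = f (G.r e))

/-- A vertex is a source if it receives no edges. -/
def IsSource (G : CKGraph) (v : G.V) : Prop := ∀ e, G.r e ≠ v

/-- A vertex is a sink if it emits no edges. -/
def IsSink (G : CKGraph) (v : G.V) : Prop := ∀ e, G.s e ≠ v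

/-- A vertex is regular if it emits at least one and only finitely many edges. -/
def Regular (G : CKGraph) (v : G.V) : Prop :=
  Nonempty {e : G.E // G.s e = v} ∧ Finite {e : G.E // G.s e = v}

/-- The outsplit graph of `G` at the vertex `w` with respect to the
partition of `s⁻¹(w)` encoded by `P`. -/
noncomputable def outsplit (G : CKGraph) (w : G.V) (n : ℕ)
    (P : {e : G.E // G.s e = w} → Fin n) : CKGraph where
  V := {v : G.V // v ≠ w} ⊕ Fin n
  E := {e : G.E // G.r e ≠ w} ⊕ ({e : G.E // G.r e = w} × Fin n)
  finV := inferInstance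
  cntE := inferInstance
  s := Sum.elim
    (fun e => if h : G.s e.1 = w then Sum.inr (P ⟨e.1, h⟩) else Sum.inl ⟨G.s e.1, h⟩)
    (fun ei => if h : G.s ei.1.1 = w then Sum.inr (P ⟨ei.1.1, h⟩)
               else Sum.inl ⟨G.s ei.1.1, h⟩)
  r := Sum.elim
    (fun e => Sum.inl ⟨G.r e.1, e.2⟩)
    (fun ei => Sum.inr ei.2)

/-- Move (O): `H` is obtained from `G` by an outsplit at a non-sink `w`
with respect to a partition of `s⁻¹(w)` into nonempty sets, at most one of
which is infinite. -/
def MoveO (G H : CKGraph) : Prop :=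
  ∃ (w : G.V) (n : ℕ) (P : {e : G.E // G.s e = w} → Fin n),
    Nonempty {e : G.E // G.s e = w} ∧
    Function.Surjective P ∧
    (∀ i j : Fin n, {e | P e = i}.Infinite → {e | P e = j}.Infinite → i = j) ∧
    Iso (G.outsplit w n P) H

/-- The insplit graph of `G` at the regular vertex `w` with respect to the
partition of `r⁻¹(w)` (into possibly empty sets) encoded by `P`. -/
noncomputable def insplit (G : CKGraph) (w : G.V) (n : ℕ)
    (P : {e : G.E // G.r e = w} → Fin n) : CKGraph where
  V := {v : G.V // v ≠ w} ⊕ Fin n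
  E := {e : G.E // G.s e ≠ w} ⊕ ({e : G.E // G.s e = w} × Fin n)
  finV := inferInstance
  cntE := inferInstance
  s := Sum.elim
    (fun e => Sum.inl ⟨G.s e.1, e.2⟩)
    (fun ei => Sum.inr ei.2)
  r := Sum.elim
    (fun e => if h : G.r e.1 = w then Sum.inr (P ⟨e.1, h⟩) else Sum.inl ⟨G.r e.1, h⟩)
    (fun ei => if h : G.r ei.1.1 = w then Sum.inr (P ⟨ei.1.1, h⟩)
               else Sum.inl ⟨G.r ei.1.1, h⟩)

/-- Move (I-): `H` is obtained from `G` by an insplit at a regular vertex `w`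
with respect to a partition of `r⁻¹(w)` into `n ≥ 1` possibly empty sets. -/
def MoveIm (G H : CKGraph) : Prop :=
  ∃ (w : G.V) (n : ℕ) (P : {e : G.E // G.r e = w} → Fin n),
    G.Regular w ∧ 1 ≤ n ∧ Iso (G.insplit w n P) H

/-- Move (I+): `G` and `H` are both obtained from a common graph `K` by
insplitting at the same regular vertex via two partitions with the same
number of (possibly empty) sets. -/
def MoveIp (G H : CKGraph) : Prop :=
  ∃ (K : CKGraph) (w : K.V) (n : ℕ)
    (P Q : {e : K.E // K.r e = w} → Fin n),
    K.Regular w ∧ 1 ≤ n ∧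
    Iso (K.insplit w n P) G ∧ Iso (K.insplit w n Q) H

/-- The reduced graph of `G` at a regular vertex `w` supporting no loop. -/
noncomputable def reduce (G : CKGraph) (w : G.V) : CKGraph where
  V := {v : G.V // v ≠ w} ⊕ Unit
  E := {e : G.E // G.s e ≠ w ∧ G.r e ≠ w} ⊕
       (({e : G.E // G.r e = w} × {f : G.E // G.s f = w}) ⊕ {f : G.E // G.s f = w})
  finV := inferInstance
  cntE := inferInstance
  s := Sum.elim
    (fun e => Sum.inl ⟨G.s e.1, e.2.1⟩)
    (Sum.elim
      (fun ef => if h : G.s ef.1.1 = w then Sum.inr () else Sum.inl ⟨G.s ef.1.1, h⟩)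
      (fun _ => Sum.inr ()))
  r := Sum.elim
    (fun e => Sum.inl ⟨G.r e.1, e.2.2⟩)
    (Sum.elim
      (fun ef => if h : G.r ef.2.1 = w then Sum.inr () else Sum.inl ⟨G.r ef.2.1, h⟩)
      (fun f => if h : G.r f.1 = w then Sum.inr () else Sum.inl ⟨G.r f.1, h⟩))

/-- Move (R+): `H` is obtained from `G` by a unital reduction at a regular
vertex `w` which supports no loop. -/
def MoveRp (G H : CKGraph) : Prop :=
  ∃ w : G.V, G.Regular w ∧ (∀ e : G.E, ¬ (G.s e = w ∧ G.r e = w)) ∧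
    Iso (G.reduce w) H

/-- Two graphs are move equivalent via the relation `R` (describing the
allowed moves) if there is a finite sequence of graphs starting at the first,
each obtained from the previous by a move in `R` or the inverse of such a
move, and ending at a graph isomorphic to the second. -/
def MoveEquiv (R : CKGraph → CKGraph → Prop) (G H : CKGraph) : Prop :=
  ∃ K, Relation.ReflTransGen (fun A B => R A B ∨ R B A) G K ∧ Iso K H

/-- The graph `G(c,n)`: a vertex with `c` loops, receiving `n` edges from a
second (source) vertex; for `n = 0` the source vertex is omitted. -/
def Gcn (c n : ℕ) : CKGraph where
  V := Unit ⊕ Fin (min n 1)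
  E := Fin c ⊕ Fin n
  finV := inferInstance
  cntE := inferInstance
  s := Sum.elim (fun _ => Sum.inl ()) (fun e => Sum.inr ⟨0, lt_min e.pos one_pos⟩)
  r := fun _ => Sum.inl ()

/-- The graph with adjacency matrix `A` (the `(i,j)` entry being the number
of edges from vertex `i` to vertex `j`). -/
def adjGraph {k : ℕ} (A : Fin k → Fin k → ℕ) : CKGraph where
  V := Fin k
  E := (i : Fin k) × (j : Fin k) × Fin (A i j)
  finV := inferInstance
  cntE := inferInstance
  s := fun e => e.1
  r := fun e => e.2.1


/-- Entry-wise product of two 2×2 matrices of natural numbers. -/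
def matMul (A B : Fin 2 → Fin 2 → ℕ) : Fin 2 → Fin 2 → ℕ := fun i j => ∑ l, A i l * B l j

/-- Matrix-vector product for 2×2 matrices of natural numbers. -/
def matVec (A : Fin 2 → Fin 2 → ℕ) (D : Fin 2 → ℕ) : Fin 2 → ℕ := fun i => ∑ l, A i l * D l

def T1 : Fin 2 → Fin 2 → ℕ := ![![1, 1], ![0, 1]]

def T2 : Fin 2 → Fin 2 → ℕ := ![![1, 0], ![1, 1]]

/-- The graph represented by the pair `(D, B)`: the graph `Γ(d₁-1, d₂-1; a)`
with `a i j = b j i + δ i j`. -/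
def pairGraph (D : Fin 2 → ℕ) (B : Fin 2 → Fin 2 → ℕ) : CKGraph :=
  adjGraph ![![0, D 0 - 1, D 1 - 1], ![0, B 0 0 + 1, B 1 0], ![0, B 0 1, B 1 1 + 1]]

/-- Number of edges emitted by the auxiliary source attached above vertex
`u_t` in the graph `F(n₁,…,n_k)`; here `n t` denotes `n_{t+1}` (0-indexed). -/
def srcCount (k : ℕ) (n : Fin k → ℕ) (t : Fin k) : ℕ :=
  if t.val + 1 < k then n t - 1 else n t

/-- The graph `F(n₁,…,n_k)` : vertices `u₀,…,u_{k-1}` (`u₀` a sink), one edge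
`u_j → u_{j-1}` for `1 ≤ j ≤ k-1`, and for each `t` a source emitting
`srcCount` edges to `u_t` (present only when that count is positive), so that
the number of paths of length `i` ending at `u₀` is `nᵢ`. -/
def Fgraph (k : ℕ) (n : Fin k → ℕ) : CKGraph where
  V := Fin k ⊕ {t : Fin k // 0 < srcCount k n t}
  E := {j : Fin k // 0 < j.val} ⊕ ((t : Fin k) × Fin (srcCount k n t))
  finV := inferInstance
  cntE := inferInstance
  s := Sum.elim (fun j => Sum.inl j.1) (fun te => Sum.inr ⟨te.1, te.2.pos⟩)
  r := Sum.elim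
    (fun j => Sum.inl ⟨j.1.val - 1, lt_of_le_of_lt (Nat.sub_le _ _) j.1.isLt⟩)
    (fun te => Sum.inl te.1)

/-- The graph `E(n₁,…,n_k)` : a cycle `v₀ → v₁ → ⋯ → v_{k-1} → v₀` together
with a single extra vertex emitting `n i` edges to `v i`; the extra vertex is
omitted when all `n i = 0`. -/
def Egraph (k : ℕ) (n : Fin k → ℕ) : CKGraph where
  V := Fin k ⊕ {_u : Unit // ∃ i, 0 < n i}
  E := Fin k ⊕ ((i : Fin k) × Fin (n i))
  finV := inferInstance
  cntE := inferInstance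
  s := Sum.elim (fun j => Sum.inl j) (fun ie => Sum.inr ⟨(), ⟨ie.1, ie.2.pos⟩⟩)
  r := Sum.elim (fun j => Sum.inl ⟨(j.val + 1) % k, Nat.mod_lt _ j.pos⟩)
    (fun ie => Sum.inl ie.1)

/-- The graph `T k` : vertices `u₀,…,u_k`, countably infinitely many loops at
`u₀` and exactly one edge `u_j → u_{j-1}` for `1 ≤ j ≤ k`. -/
def Tgraph (k : ℕ) : CKGraph where
  V := Fin (k + 1)
  E := ℕ ⊕ {j : Fin (k + 1) // 0 < j.val}
  finV := inferInstance
  cntE := inferInstance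
  s := Sum.elim (fun _ => ⟨0, Nat.succ_pos k⟩) (fun j => j.1)
  r := Sum.elim (fun _ => ⟨0, Nat.succ_pos k⟩)
    (fun j => ⟨j.1.val - 1, lt_of_le_of_lt (Nat.sub_le _ _) j.1.isLt⟩)

/-- One-step reachability: there is an edge from `u` to `v`. -/
def Step (G : CKGraph) (u v : G.V) : Prop := ∃ e, G.s e = u ∧ G.r e = v

/-- There is a (possibly empty) path from `u` to `v`. -/
def Reaches (G : CKGraph) : G.V → G.V → Prop := Relation.ReflTransGen G.Step

/-- `v` lies on a cycle: there is a nontrivial path from `v` back to `v`. -/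
def OnCycle (G : CKGraph) (v : G.V) : Prop := ∃ u, G.Step v u ∧ G.Reaches u v

/-- The core of `G`: the vertices lying on cycles if `G` has a cycle, and
otherwise the sinks. -/
def core (G : CKGraph) (v : G.V) : Prop :=
  ((∃ u, G.OnCycle u) → G.OnCycle v) ∧ ((¬ ∃ u, G.OnCycle u) → G.IsSink v)

/-- A transitional vertex: neither a source nor in the core. -/
def Transitional (G : CKGraph) (v : G.V) : Prop := ¬ G.IsSource v ∧ ¬ G.core v

/-- The core hypotheses: any two vertices on cycles are mutually connected by
paths; if there is a cycle there are no sinks, otherwise there is exactly one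
sink; every vertex reaches the core; and every non-core vertex emits only
finitely many edges. -/
structure CoreHyp (G : CKGraph) : Prop where
  conn : ∀ u v, G.OnCycle u → G.OnCycle v → G.Reaches u v
  noSinks : (∃ v, G.OnCycle v) → ∀ v, ¬ G.IsSink v
  uniqueSink : (¬ ∃ v, G.OnCycle v) → ∃! v, G.IsSink v
  reach : ∀ v, ∃ c, G.core c ∧ G.Reaches v c
  finEmit : ∀ v, ¬ G.core v → Finite {e : G.E // G.s e = v}

/-- The core subgraph: core vertices together with all edges between them. -/
def coreSubgraph (G : CKGraph) : CKGraph where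
  V := {v : G.V // G.core v}
  E := {e : G.E // G.core (G.s e) ∧ G.core (G.r e)}
  finV := inferInstance
  cntE := inferInstance
  s := fun e => ⟨G.s e.1, e.2.1⟩
  r := fun e => ⟨G.r e.1, e.2.2⟩

end CKGraph

open CKGraph


/- ----------------------------------------------------------------------- -/
/- Auxiliary counting machinery                                             -/
/- ----------------------------------------------------------------------- -/

section AuxTool
universe u v

noncomputable def subtypeSumEquiv {α : Type u} {β : Type v} (p : α ⊕ β → Prop) :
    {x : α ⊕ β // p x} ≃ {a : α // p (Sum.inl a)} ⊕ {b : β // p (Sum.inr b)} where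
  toFun x := match x with
    | ⟨Sum.inl a, h⟩ => Sum.inl ⟨a, h⟩
    | ⟨Sum.inr b, h⟩ => Sum.inr ⟨b, h⟩
  invFun x := match x with
    | Sum.inl ⟨a, h⟩ => ⟨Sum.inl a, h⟩
    | Sum.inr ⟨b, h⟩ => ⟨Sum.inr b, h⟩
  left_inv := by rintro ⟨a | b, h⟩ <;> rfl
  right_inv := by rintro (⟨a, h⟩ | ⟨b, h⟩) <;> rfl

lemma card_subtype_sum {α : Type u} {β : Type v} [Finite α] [Finite β] (p : α ⊕ β → Prop) :
    Nat.card {x : α ⊕ β // p x}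
      = Nat.card {a : α // p (Sum.inl a)} + Nat.card {b : β // p (Sum.inr b)} := by
  rw [Nat.card_congr (subtypeSumEquiv p), Nat.card_sum]

noncomputable def subtypeSigmaEquiv {ι : Type u} {F : ι → Type v} (p : (Σ i, F i) → Prop) :
    {x : Σ i, F i // p x} ≃ Σ i, {y : F i // p ⟨i, y⟩} where
  toFun x := ⟨x.1.1, x.1.2, by obtain ⟨⟨i, y⟩, h⟩ := x; exact h⟩
  invFun x := ⟨⟨x.1, x.2.1⟩, x.2.2⟩
  left_inv := by rintro ⟨⟨i, y⟩, h⟩; rfl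
  right_inv := by rintro ⟨i, y, h⟩; rfl

lemma nat_card_sigma {ι : Type u} {F : ι → Type v} [Fintype ι] [∀ i, Finite (F i)] :
    Nat.card (Σ i, F i) = ∑ i, Nat.card (F i) := by
  letI : ∀ i, Fintype (F i) := fun i => Fintype.ofFinite _
  simp [Nat.card_eq_fintype_card, Fintype.card_sigma]

lemma card_subtype_sigma {ι : Type u} {F : ι → Type v} [Fintype ι] [∀ i, Finite (F i)]
    (p : (Σ i, F i) → Prop) :
    Nat.card {x : Σ i, F i // p x} = ∑ i, Nat.card {y : F i // p ⟨i, y⟩} := by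
  rw [Nat.card_congr (subtypeSigmaEquiv p), nat_card_sigma]

lemma card_adjE_fiber {k : ℕ} (M : Fin k → Fin k → ℕ)
    (p : ((i : Fin k) × (j : Fin k) × Fin (M i j)) → Prop) :
    Nat.card {e : (i : Fin k) × (j : Fin k) × Fin (M i j) // p e}
      = ∑ i, ∑ j, Nat.card {t : Fin (M i j) // p ⟨i, j, t⟩} := by
  rw [card_subtype_sigma]
  exact Finset.sum_congr rfl fun i _ => card_subtype_sigma _

lemma card_subtype_subtype {α : Type u} (q : α → Prop) (p : {x // q x} → Prop) :
    Nat.card {x : {a // q a} // p x} = Nat.card {a : α // ∃ h : q a, p ⟨a, h⟩} :=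
  Nat.card_congr
    { toFun := fun x => ⟨x.1.1, x.1.2, by obtain ⟨⟨a, hq⟩, hp⟩ := x; exact hp⟩
      invFun := fun a => ⟨⟨a.1, a.2.1⟩, a.2.2⟩
      left_inv := by rintro ⟨⟨a, hq⟩, hp⟩; rfl
      right_inv := by rintro ⟨a, hq, hp⟩; rfl }

noncomputable def prodFin2Equiv {γ : Type u} (p : γ × Fin 2 → Prop) :
    {x : γ × Fin 2 // p x} ≃ {c : γ // p (c, 0)} ⊕ {c : γ // p (c, 1)} where
  toFun x := if h : x.1.2 = 0
    then Sum.inl ⟨x.1.1, by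
      have hx := x.2; rwa [show x.1 = (x.1.1, 0) from Prod.ext rfl h] at hx⟩
    else Sum.inr ⟨x.1.1, by
      have h1 : x.1.2 = 1 := by omega
      have hx := x.2; rwa [show x.1 = (x.1.1, 1) from Prod.ext rfl h1] at hx⟩
  invFun := Sum.elim (fun a => ⟨(a.1, 0), a.2⟩) (fun a => ⟨(a.1, 1), a.2⟩)
  left_inv := by
    rintro ⟨⟨c, i⟩, h⟩
    fin_cases i <;> simp
  right_inv := by
    rintro (⟨a, h⟩ | ⟨a, h⟩) <;> simp

lemma card_subtype_prodFin2 {γ : Type u} [Finite γ] (p : γ × Fin 2 → Prop) :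
    Nat.card {x : γ × Fin 2 // p x}
      = Nat.card {c : γ // p (c, 0)} + Nat.card {c : γ // p (c, 1)} := by
  rw [Nat.card_congr (prodFin2Equiv p), Nat.card_sum]

lemma card_prod_single {A : Type u} {B : Type v} (b₀ : B) (hb : ∀ b : B, b = b₀)
    (p : A × B → Prop) :
    Nat.card {x : A × B // p x} = Nat.card {a : A // p (a, b₀)} :=
  Nat.card_congr
    { toFun := fun x => ⟨x.1.1, by
        have hx := x.2; rwa [show x.1 = (x.1.1, b₀) from Prod.ext rfl (hb _)] at hx⟩
      invFun := fun a => ⟨(a.1, b₀), a.2⟩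
      left_inv := by rintro ⟨⟨a, b⟩, h⟩; simp [hb b]
      right_inv := by rintro ⟨a, h⟩; rfl }

lemma card_fin_true (m : ℕ) : Nat.card {t : Fin m // True} = m := by
  rw [Nat.card_congr (Equiv.subtypeUnivEquiv fun _ => trivial), Nat.card_eq_fintype_card,
    Fintype.card_fin]

lemma card_fin_false (m : ℕ) : Nat.card {t : Fin m // False} = 0 := Nat.card_of_isEmpty

lemma card_fin_val_eq_zero (m : ℕ) :
    Nat.card {t : Fin m // (t : ℕ) = 0} = min m 1 := by
  rcases Nat.eq_zero_or_pos m with rfl | hm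
  · rw [Nat.card_of_isEmpty]; omega
  · haveI : Nonempty {t : Fin m // (t : ℕ) = 0} := ⟨⟨⟨0, hm⟩, rfl⟩⟩
    haveI : Subsingleton {t : Fin m // (t : ℕ) = 0} := ⟨by
      rintro ⟨a, ha⟩ ⟨b, hb⟩
      simp only [Subtype.mk.injEq]
      exact Fin.ext (ha.trans hb.symm)⟩
    rw [Nat.card_unique]
    omega

lemma card_fin_val_ne_zero (m : ℕ) :
    Nat.card {t : Fin m // ¬ (t : ℕ) = 0} = m - 1 := by
  rcases Nat.eq_zero_or_pos m with rfl | hm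
  · exact Nat.card_of_isEmpty
  · have key : Nat.card {t : Fin m // (t : ℕ) = 0}
        + Nat.card {t : Fin m // ¬ (t : ℕ) = 0} = m := by
      classical
      rw [Nat.card_eq_fintype_card, Nat.card_eq_fintype_card, Fintype.card_subtype,
        Fintype.card_subtype,
        Finset.card_filter_add_card_filter_not (p := fun t : Fin m => (t : ℕ) = 0),
        Finset.card_univ, Fintype.card_fin]
    rw [card_fin_val_eq_zero m] at key
    omega

lemma ite_fin2_eq_zero (c : Prop) [Decidable c] :
    ((if c then (0 : Fin 2) else 1) = 0) ↔ c := by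
  by_cases h : c <;> simp [h]

lemma ite_fin2_eq_one (c : Prop) [Decidable c] :
    ((if c then (0 : Fin 2) else 1) = 1) ↔ ¬ c := by
  by_cases h : c <;> simp [h]

end AuxTool

namespace CKGraph

lemma Iso.rfl' (G : CKGraph) : Iso G G :=
  ⟨Equiv.refl _, Equiv.refl _, fun _ => rfl, fun _ => rfl⟩

noncomputable def edgeFiberEquiv (G : CKGraph) :
    G.E ≃ Σ u : G.V, Σ v : G.V, {e : G.E // G.s e = u ∧ G.r e = v} where
  toFun e := ⟨G.s e, G.r e, e, rfl, rfl⟩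
  invFun x := x.2.2.1
  left_inv e := rfl
  right_inv := by rintro ⟨u, v, e, rfl, rfl⟩; rfl

lemma iso_adjGraph (G : CKGraph) [Finite G.E] {k : ℕ} (A : Fin k → Fin k → ℕ)
    (f : G.V ≃ Fin k)
    (hcard : ∀ u v, Nat.card {e : G.E // G.s e = u ∧ G.r e = v} = A (f u) (f v)) :
    Iso G (adjGraph A) := by
  have fib : ∀ u v, {e : G.E // G.s e = u ∧ G.r e = v} ≃ Fin (A (f u) (f v)) :=
    fun u v => Finite.equivFinOfCardEq (hcard u v)
  refine ⟨f, (edgeFiberEquiv G).trans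
    (Equiv.sigmaCongr f (fun u => Equiv.sigmaCongr f (fun v => fib u v))), ?_, ?_⟩ <;>
    intro e <;> rfl

end CKGraph

instance adjGraph.finV {k : ℕ} (A : Fin k → Fin k → ℕ) : Fintype ((adjGraph A).V) :=
  inferInstanceAs (Fintype (Fin k))

instance adjGraph.finE {k : ℕ} (A : Fin k → Fin k → ℕ) : Finite ((adjGraph A).E) :=
  inferInstanceAs (Finite ((i : Fin k) × (j : Fin k) × Fin (A i j)))

instance outsplit.finE (G : CKGraph) [Finite G.E] (w : G.V) (n : ℕ)
    (P : {e : G.E // G.s e = w} → Fin n) : Finite ((G.outsplit w n P).E) :=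
  inferInstanceAs (Finite ({e : G.E // G.r e ≠ w} ⊕ ({e : G.E // G.r e = w} × Fin n)))

instance reduce.finE (G : CKGraph) [Finite G.E] (w : G.V) : Finite ((G.reduce w).E) :=
  inferInstanceAs (Finite ({e : G.E // G.s e ≠ w ∧ G.r e ≠ w} ⊕
    (({e : G.E // G.r e = w} × {f : G.E // G.s f = w}) ⊕ {f : G.E // G.s f = w})))

noncomputable def gammaF1 : ({v : Fin 3 // v ≠ 1} ⊕ Fin 2) ≃ Fin 4 where
  toFun := Sum.elim (fun v => if v.1 = 0 then 0 else 3) (fun i => if i = 0 then 1 else 2)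
  invFun := ![Sum.inl ⟨0, by decide⟩, Sum.inr 0, Sum.inr 1, Sum.inl ⟨2, by decide⟩]
  left_inv := by
    rintro (⟨v, hv⟩ | i)
    · fin_cases v <;> simp_all <;> exact hv rfl
    · fin_cases i <;> rfl
  right_inv := by intro x; fin_cases x <;> rfl

noncomputable def gammaF2 : ({v : Fin 4 // v ≠ 1} ⊕ Unit) ≃ Fin 4 where
  toFun := Sum.elim (fun v => v.1) (fun _ => 1)
  invFun := fun x => if h : x = 1 then Sum.inr () else Sum.inl ⟨x, h⟩
  left_inv := by
    rintro (⟨v, hv⟩ | ⟨⟩)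
    · simp [hv]
    · simp
  right_inv := by
    intro x
    by_cases h : x = 1 <;> simp [h]

noncomputable def gammaF3 : ({v : Fin 3 // v ≠ 0} ⊕ Fin 2) ≃ Fin 4 where
  toFun := Sum.elim (fun v => if v.1 = 1 then 2 else 3) (fun i => if i = 0 then 1 else 0)
  invFun := ![Sum.inr 1, Sum.inr 0, Sum.inl ⟨1, by decide⟩, Sum.inl ⟨2, by decide⟩]
  left_inv := by
    rintro (⟨v, hv⟩ | i)
    · fin_cases v <;> simp_all <;> exact hv rfl
    · fin_cases i <;> rfl
  right_inv := by intro x; fin_cases x <;> rfl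

set_option maxHeartbeats 4000000 in
lemma gamma_step1 (c₁ c₂ a₁₁ a₁₂ a₂₁ a₂₂ : ℕ) (hc₁ : 0 < c₁) (hc₂ : 0 < c₂)
    (h11 : 0 < a₁₁) (h12 : 0 < a₁₂) (h21 : 0 < a₂₁) (h22 : 0 < a₂₂) :
    MoveO (adjGraph ![![0, c₁, c₂], ![0, a₁₁, a₁₂], ![0, a₂₁, a₂₂]])
      (adjGraph ![![0, c₁, c₁, c₂], ![0, 0, 0, 1], ![0, a₁₁, a₁₁, a₁₂ - 1],
        ![0, a₂₁, a₂₁, a₂₂]]) := by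
  have hM11 : 0 < (![![0, c₁, c₂], ![0, a₁₁, a₁₂], ![0, a₂₁, a₂₂]] : Fin 3 → Fin 3 → ℕ) 1 1 := by
    simpa using h11
  have hM12 : 0 < (![![0, c₁, c₂], ![0, a₁₁, a₁₂], ![0, a₂₁, a₂₂]] : Fin 3 → Fin 3 → ℕ) 1 2 := by
    simpa using h12
  refine ⟨(1 : Fin 3), 2, fun x => if (x.1.2.1 = (2 : Fin 3) ∧ (x.1.2.2 : ℕ) = 0) then 0 else 1,
    ⟨⟨⟨1, 1, ⟨0, hM11⟩⟩, rfl⟩⟩, ?_, ?_, ?_⟩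
  · intro i
    fin_cases i
    · exact ⟨⟨⟨1, 2, ⟨0, hM12⟩⟩, rfl⟩, by simp⟩
    · exact ⟨⟨⟨1, 1, ⟨0, hM11⟩⟩, rfl⟩, by simp⟩
  · exact fun i j hi _ => absurd hi (Set.not_infinite.mpr (Set.toFinite _))
  · refine @iso_adjGraph _ (outsplit.finE _ _ _ _) _ _ gammaF1 ?_
    rintro (⟨u, hu⟩ | i) (⟨v, hv⟩ | j) <;>
    [(fin_cases u <;> fin_cases v); (fin_cases u <;> fin_cases j);
     (fin_cases i <;> fin_cases v); (fin_cases i <;> fin_cases j)] <;>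
    first
    | exact absurd rfl hu
    | exact absurd rfl hv
    | (simp only [CKGraph.outsplit, CKGraph.adjGraph]
       rw [card_subtype_sum]
       simp only [Sum.elim_inl, Sum.elim_inr]
       rw [card_subtype_subtype, card_subtype_prodFin2, card_subtype_subtype,
         card_subtype_subtype]
       rw [card_adjE_fiber, card_adjE_fiber, card_adjE_fiber]
       simp (config := { decide := true }) [Fin.sum_univ_three, gammaF1,
         -Nat.card_eq_fintype_card,
         card_fin_true, card_fin_false, card_fin_val_eq_zero, card_fin_val_ne_zero,
         ite_fin2_eq_zero, ite_fin2_eq_one, Matrix.cons_val_zero, Matrix.cons_val_one,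
         Matrix.head_cons, DFunLike.coe, EquivLike.coe, Nat.card_fin] <;>
       omega)

set_option maxHeartbeats 4000000 in
lemma gamma_step2 (c₁ c₂ a₁₁ a₁₂ a₂₁ a₂₂ : ℕ) (hc₁ : 0 < c₁) (hc₂ : 0 < c₂)
    (h11 : 0 < a₁₁) (h12 : 0 < a₁₂) (h21 : 0 < a₂₁) (h22 : 0 < a₂₂) :
    MoveRp
      (adjGraph ![![0, c₁, c₁, c₂], ![0, 0, 0, 1], ![0, a₁₁, a₁₁, a₁₂ - 1],
        ![0, a₂₁, a₂₁, a₂₂]])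
      (adjGraph ![![0, 0, c₁, c₂ + c₁], ![0, 0, 0, 1], ![0, 0, a₁₁, a₁₂ + a₁₁ - 1],
        ![0, 0, a₂₁, a₂₂ + a₂₁]]) := by
  have hMB13 : 0 < (![![0, c₁, c₁, c₂], ![0, 0, 0, 1], ![0, a₁₁, a₁₁, a₁₂ - 1],
      ![0, a₂₁, a₂₁, a₂₂]] : Fin 4 → Fin 4 → ℕ) 1 3 := by exact Nat.one_pos
  refine ⟨(1 : Fin 4), ⟨⟨⟨⟨1, 3, ⟨0, hMB13⟩⟩, rfl⟩⟩, inferInstance⟩, ?_, ?_⟩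
  · rintro ⟨i, j, t⟩ ⟨hs, hr⟩
    have hi : i = 1 := hs
    have hj : j = 1 := hr
    subst hi; subst hj
    have h0 := t.2
    simp at h0
  · have hsingle : ∀ b : {f : (i : Fin 4) × (j : Fin 4) × Fin
        (![![0, c₁, c₁, c₂], ![0, 0, 0, 1], ![0, a₁₁, a₁₁, a₁₂ - 1],
          ![0, a₂₁, a₂₁, a₂₂]] i j) // f.1 = (1 : Fin 4)},
        b = ⟨⟨1, 3, ⟨0, hMB13⟩⟩, rfl⟩ := by
      rintro ⟨⟨i, j, t⟩, hs⟩
      have hi : i = 1 := hs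
      subst hi
      apply Subtype.ext
      fin_cases j
      · exact absurd t.2 (by simp)
      · exact absurd t.2 (by simp)
      · exact absurd t.2 (by simp)
      · have h2 := t.2
        simp at h2
        exact Sigma.ext rfl (heq_of_eq (Sigma.ext rfl (heq_of_eq (Fin.ext h2))))
    refine @iso_adjGraph _ (reduce.finE _ _) _ _ gammaF2 ?_
    rintro (⟨u, hu⟩ | ⟨⟩) (⟨v, hv⟩ | ⟨⟩) <;>
    [(fin_cases u <;> fin_cases v); fin_cases u; fin_cases v; skip] <;>
    first
    | exact absurd rfl hu
    | exact absurd rfl hv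
    | (simp only [CKGraph.reduce, CKGraph.adjGraph]
       rw [card_subtype_sum, card_subtype_sum]
       simp only [Sum.elim_inl, Sum.elim_inr]
       rw [card_subtype_subtype, card_prod_single _ hsingle, card_subtype_subtype,
         card_subtype_subtype]
       rw [card_adjE_fiber, card_adjE_fiber, card_adjE_fiber]
       simp (config := { decide := true }) [Fin.sum_univ_four, gammaF2,
         -Nat.card_eq_fintype_card,
         card_fin_true, card_fin_false, card_fin_val_eq_zero, card_fin_val_ne_zero,
         Matrix.cons_val_zero, Matrix.cons_val_one, Matrix.head_cons, DFunLike.coe, EquivLike.coe,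
         Nat.card_fin] <;>
       omega)

set_option maxHeartbeats 4000000 in
lemma gamma_step3 (c₁ c₂ a₁₁ a₁₂ a₂₁ a₂₂ : ℕ) (hc₁ : 0 < c₁) (hc₂ : 0 < c₂)
    (h11 : 0 < a₁₁) (h12 : 0 < a₁₂) (h21 : 0 < a₂₁) (h22 : 0 < a₂₂) :
    MoveO (adjGraph ![![0, c₁, c₂ + c₁ + 1], ![0, a₁₁, a₁₂ + a₁₁ - 1],
        ![0, a₂₁, a₂₂ + a₂₁]])
      (adjGraph ![![0, 0, c₁, c₂ + c₁], ![0, 0, 0, 1], ![0, 0, a₁₁, a₁₂ + a₁₁ - 1],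
        ![0, 0, a₂₁, a₂₂ + a₂₁]]) := by
  have hM01 : 0 < (![![0, c₁, c₂ + c₁ + 1], ![0, a₁₁, a₁₂ + a₁₁ - 1],
      ![0, a₂₁, a₂₂ + a₂₁]] : Fin 3 → Fin 3 → ℕ) 0 1 := by simpa using hc₁
  have hM02 : 0 < (![![0, c₁, c₂ + c₁ + 1], ![0, a₁₁, a₁₂ + a₁₁ - 1],
      ![0, a₂₁, a₂₂ + a₂₁]] : Fin 3 → Fin 3 → ℕ) 0 2 := by simp
  refine ⟨(0 : Fin 3), 2, fun x => if (x.1.2.1 = (2 : Fin 3) ∧ (x.1.2.2 : ℕ) = 0) then 0 else 1,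
    ⟨⟨⟨0, 1, ⟨0, hM01⟩⟩, rfl⟩⟩, ?_, ?_, ?_⟩
  · intro i
    fin_cases i
    · exact ⟨⟨⟨0, 2, ⟨0, hM02⟩⟩, rfl⟩, by simp⟩
    · exact ⟨⟨⟨0, 1, ⟨0, hM01⟩⟩, rfl⟩, by simp⟩
  · exact fun i j hi _ => absurd hi (Set.not_infinite.mpr (Set.toFinite _))
  · refine @iso_adjGraph _ (outsplit.finE _ _ _ _) _ _ gammaF3 ?_
    rintro (⟨u, hu⟩ | i) (⟨v, hv⟩ | j) <;>
    [(fin_cases u <;> fin_cases v); (fin_cases u <;> fin_cases j);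
     (fin_cases i <;> fin_cases v); (fin_cases i <;> fin_cases j)] <;>
    first
    | exact absurd rfl hu
    | exact absurd rfl hv
    | (simp only [CKGraph.outsplit, CKGraph.adjGraph]
       rw [card_subtype_sum]
       simp only [Sum.elim_inl, Sum.elim_inr]
       rw [card_subtype_subtype, card_subtype_prodFin2, card_subtype_subtype,
         card_subtype_subtype]
       rw [card_adjE_fiber, card_adjE_fiber, card_adjE_fiber]
       simp (config := { decide := true }) [Fin.sum_univ_three, gammaF3,
         -Nat.card_eq_fintype_card, -Fin.val_eq_zero_iff,
         card_fin_true, card_fin_false, card_fin_val_eq_zero, card_fin_val_ne_zero,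
         ite_fin2_eq_zero, ite_fin2_eq_one, Matrix.cons_val_zero, Matrix.cons_val_one,
         Matrix.head_cons, DFunLike.coe, EquivLike.coe, Nat.card_fin] <;>
       omega)


/-- For positive `c₁, c₂, a₁₁, a₁₂, a₂₁, a₂₂`, the graph
`Γ(c₁,c₂;a)` is move equivalent via the moves (O) and (R+) to the graph with
adjacency matrix `[[0,c₁,c₂+c₁+1],[0,a₁₁,a₁₂+a₁₁−1],[0,a₂₁,a₂₂+a₂₁]]`. -/
theorem Gamma_moveEquiv_O_Rplus (c₁ c₂ a₁₁ a₁₂ a₂₁ a₂₂ : ℕ)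
    (hc₁ : 0 < c₁) (hc₂ : 0 < c₂) (h₁₁ : 0 < a₁₁) (h₁₂ : 0 < a₁₂)
    (h₂₁ : 0 < a₂₁) (h₂₂ : 0 < a₂₂) :
    MoveEquiv (fun A B => MoveO A B ∨ MoveRp A B)
      (adjGraph ![![0, c₁, c₂], ![0, a₁₁, a₁₂], ![0, a₂₁, a₂₂]])
      (adjGraph ![![0, c₁, c₂ + c₁ + 1], ![0, a₁₁, a₁₂ + a₁₁ - 1],
        ![0, a₂₁, a₂₂ + a₂₁]]) := by
  
  refine ⟨adjGraph ![![0, c₁, c₂ + c₁ + 1], ![0, a₁₁, a₁₂ + a₁₁ - 1],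
      ![0, a₂₁, a₂₂ + a₂₁]], ?_, CKGraph.Iso.rfl' _⟩
  refine Relation.ReflTransGen.head
    (Or.inl (Or.inl (gamma_step1 c₁ c₂ a₁₁ a₁₂ a₂₁ a₂₂ hc₁ hc₂ h₁₁ h₁₂ h₂₁ h₂₂))) ?_
  refine Relation.ReflTransGen.head
    (Or.inl (Or.inr (gamma_step2 c₁ c₂ a₁₁ a₁₂ a₂₁ a₂₂ hc₁ hc₂ h₁₁ h₁₂ h₂₁ h₂₂))) ?_
  exact Relation.ReflTransGen.single
    (Or.inr (Or.inl (gamma_step3 c₁ c₂ a₁₁ a₁₂ a₂₁ a₂₂ hc₁ hc₂ h₁₁ h₁₂ h₂₁ h₂₂)))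
end

section
/- Let c ≥ 2 and let n, m ≥ 0 be integers such that c + m = c^k (c + n) for some integer k ≥ 0, or c + n = c^k (c + m) for some integer k ≥ 0 (i.e., (c+m)/(c+n) is an integer power of c). Then the graphs G(c,n) and G(c,m) are move equivalent via the moves (O) and (I+). -/
open Classical

open CKGraph


lemma Iso.refl' (G : CKGraph) : Iso G G :=
  ⟨Equiv.refl _, Equiv.refl _, fun _ => rfl, fun _ => rfl⟩

/-- Auxiliary graph: a vertex with `c` loops receiving `c*n` edges
(indexed as `Fin c × Fin n`) from a source `w` (present iff `n > 0`). -/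
def K0 (c n : ℕ) : CKGraph where
  V := Unit ⊕ Fin (min n 1)
  E := Fin c ⊕ (Fin c × Fin n)
  finV := inferInstance
  cntE := inferInstance
  s := Sum.elim (fun _ => Sum.inl ()) (fun p => Sum.inr ⟨0, lt_min p.2.pos one_pos⟩)
  r := fun _ => Sum.inl ()

def Pout (c n : ℕ) (hc : 0 < c) :
    {e : (Gcn c n).E // (Gcn c n).s e = Sum.inl ()} → Fin c :=
  fun e => Sum.elim id (fun _ => ⟨0, hc⟩) e.1

def Pin (c n : ℕ) :
    {e : (K0 c n).E // (K0 c n).r e = Sum.inl ()} → Fin c :=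
  fun e => Sum.elim id Prod.fst e.1

def Qp (c n : ℕ) (hc : 0 < c) :
    {e : (K0 c n).E // (K0 c n).r e = Sum.inl ()} → Fin c :=
  fun _ => ⟨0, hc⟩

lemma iso1 (c n : ℕ) (hc : 0 < c) :
    Iso ((K0 c n).insplit (Sum.inl ()) c (Pin c n))
        ((Gcn c n).outsplit (Sum.inl ()) c (Pout c n hc)) := by
  refine ⟨Equiv.refl _, ⟨fun x =>
      match x with
      | Sum.inl ⟨Sum.inl j, h⟩ => (h rfl).elim
      | Sum.inl ⟨Sum.inr (i, t), _⟩ => Sum.inr (⟨Sum.inr t, rfl⟩, i)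
      | Sum.inr (⟨Sum.inl j, _⟩, i) => Sum.inr (⟨Sum.inl i, rfl⟩, j),
    fun y =>
      match y with
      | Sum.inl ⟨e, h⟩ => (h rfl).elim
      | Sum.inr (⟨Sum.inl i, _⟩, j) => Sum.inr (⟨Sum.inl j, rfl⟩, i)
      | Sum.inr (⟨Sum.inr t, _⟩, i) => Sum.inl ⟨Sum.inr (i, t), fun h => by cases h⟩,
    ?_, ?_⟩, ?_, ?_⟩
  · rintro (⟨j | ⟨i, t⟩, h⟩ | ⟨⟨j | p, h⟩, i⟩)
    · exact (h rfl).elim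
    · rfl
    · rfl
    · exact (by cases h)
  · rintro (⟨j | t, h⟩ | ⟨⟨j | t, h⟩, i⟩)
    · exact (h rfl).elim
    · exact (h rfl).elim
    · rfl
    · rfl
  · rintro (⟨j | ⟨i, t⟩, h⟩ | ⟨⟨j | p, h⟩, i⟩)
    · exact (h rfl).elim
    · simp only [Equiv.coe_fn_mk]
      simp [insplit, outsplit, K0, Gcn, Pin, Pout]
      rfl
    · simp only [Equiv.coe_fn_mk]
      simp [insplit, outsplit, K0, Gcn, Pin, Pout]
      rfl
    · exact (by cases h)
  · rintro (⟨j | ⟨i, t⟩, h⟩ | ⟨⟨j | p, h⟩, i⟩)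
    · exact (h rfl).elim
    · simp only [Equiv.coe_fn_mk]
      simp [insplit, outsplit, K0, Gcn, Pin, Pout]
      rfl
    · simp only [Equiv.coe_fn_mk]
      simp [insplit, outsplit, K0, Gcn, Pin, Pout]
      rfl
    · exact (by cases h)

lemma mp_pos {c : ℕ} (n : ℕ) (hc : 2 ≤ c) : 0 < c*n + c*(c-1) :=
  lt_of_lt_of_le (Nat.mul_pos (by omega) (by omega)) (Nat.le_add_left _ _)

/-- The non-loop vertex of `Gcn c (c*n + c*(c-1))`. -/
def wv (c n : ℕ) (hc : 2 ≤ c) : (Gcn c (c*n + c*(c-1))).V :=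
  Sum.inr ⟨0, lt_min (mp_pos n hc) one_pos⟩

/-- Partition of the edges emitted by `wv`: one block of size `c*n`
(if `n > 0`) and `c-1` blocks of size `c`. -/
def Pbig (c n : ℕ) (hc : 2 ≤ c) :
    {e : (Gcn c (c*n + c*(c-1))).E //
      (Gcn c (c*n + c*(c-1))).s e = wv c n hc} → Fin (min n 1 + (c-1)) :=
  fun e => match e.1 with
  | Sum.inl _ => ⟨0, by omega⟩
  | Sum.inr t =>
    if t.val < c*n then ⟨0, by omega⟩
    else ⟨min n 1 + (t.val - c*n)/c, by
      have ht := t.isLt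
      have hcm : c*(c-1) = (c-1)*c := Nat.mul_comm _ _
      have hpos : 0 < (c-1)*c := Nat.mul_pos (by omega) (by omega)
      have : (t.val - c*n)/c < c-1 := (Nat.div_lt_iff_lt_mul (by omega)).mpr (by omega)
      omega⟩

def f2 (c n : ℕ) (hc : 2 ≤ c) :
    ({u : (Gcn c (c*n + c*(c-1))).V // u ≠ wv c n hc} ⊕ Fin (min n 1 + (c-1))) ≃
    ({u : (K0 c n).V // u ≠ Sum.inl ()} ⊕ Fin c) where
  toFun x := match x with
    | Sum.inl ⟨Sum.inl _, _⟩ => Sum.inr ⟨0, by omega⟩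
    | Sum.inl ⟨Sum.inr x, h⟩ =>
        absurd (congrArg Sum.inr (Fin.ext (by have := x.isLt; omega)) :
          (Sum.inr x : (Gcn c (c*n + c*(c-1))).V) = wv c n hc) h
    | Sum.inr i =>
        if h : i.val < min n 1 then
          Sum.inl ⟨Sum.inr ⟨0, by omega⟩, fun hh => by cases hh⟩
        else Sum.inr ⟨i.val - min n 1 + 1, by have := i.isLt; omega⟩
  invFun y := match y with
    | Sum.inl ⟨Sum.inl (), h⟩ => (h rfl).elim
    | Sum.inl ⟨Sum.inr _, _⟩ => Sum.inr ⟨0, by omega⟩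
    | Sum.inr j =>
        if h : j.val = 0 then Sum.inl ⟨Sum.inl (), fun hh => by cases hh⟩
        else Sum.inr ⟨min n 1 + j.val - 1, by have := j.isLt; omega⟩
  left_inv := by
    rintro (⟨u | x, h⟩ | i)
    · cases u
      simp
    · exact absurd (congrArg Sum.inr (Fin.ext (by have := x.isLt; omega))) h
    · dsimp only
      by_cases hi : i.val < min n 1
      · rw [dif_pos hi]
        exact congrArg Sum.inr (Fin.ext (by simp only [Fin.val_mk]; omega))
      · rw [dif_neg hi]
        dsimp only
        rw [dif_neg (by omega)]
        exact congrArg Sum.inr (Fin.ext (by simp only [Fin.val_mk]; have := i.isLt; omega))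
  right_inv := by
    rintro (⟨u | x, h⟩ | j)
    · exact absurd rfl h
    · dsimp only
      rw [dif_pos (by have := x.isLt; omega)]
      exact congrArg Sum.inl (Subtype.ext (congrArg Sum.inr (Fin.ext (by have := x.isLt; omega))))
    · dsimp only
      by_cases hj : j.val = 0
      · rw [dif_pos hj]
        exact congrArg Sum.inr (Fin.ext (by simp only [Fin.val_mk]; omega))
      · rw [dif_neg hj]
        dsimp only
        rw [dif_neg (by have := j.isLt; omega)]
        exact congrArg Sum.inr (Fin.ext (by simp only [Fin.val_mk]; have := j.isLt; omega))

lemma npos_of_lt_mul {c n t : ℕ} (h : t < c*n) : 0 < n := by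
  rcases Nat.eq_zero_or_pos n with h0|h0
  · subst h0; simp at h
  · exact h0

lemma divc_lt {c n t : ℕ} (hc : 2 ≤ c) (ht : t < c*n + c*(c-1)) (h : ¬ t < c*n) :
    (t - c*n)/c + 1 < c := by
  have hcm : c*(c-1) = (c-1)*c := Nat.mul_comm _ _
  have hpos : 0 < (c-1)*c := Nat.mul_pos (by omega) (by omega)
  have : (t - c*n)/c < c-1 := (Nat.div_lt_iff_lt_mul (by omega)).mpr (by omega)
  omega

lemma inm_of_block {c n i j : ℕ} (hc : 2 ≤ c) (hi : i < c) (hij : 0 < i) (hj : j < c) :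
    c*n + ((i - 1)*c + j) < c*n + c*(c-1) := by
  have h1 : (i-1)*c ≤ (c-2)*c := Nat.mul_le_mul_right _ (by omega)
  have h2 : (c-1)*c = (c-2)*c + c := by
    have h3 : c-1 = (c-2)+1 := by omega
    rw [h3, Nat.add_mul, Nat.one_mul]
  have hcm : c*(c-1) = (c-1)*c := Nat.mul_comm _ _
  omega

lemma lt_cn_of_pair {c n i t : ℕ} (hi : i < c) (ht : t < n) : i*n + t < c*n := by
  have h1 : (i+1)*n ≤ c*n := Nat.mul_le_mul_right _ (by omega)
  have h2 : (i+1)*n = i*n + n := by ring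
  omega

def g2 (c n : ℕ) (hc : 2 ≤ c) :
    ({e : (Gcn c (c*n + c*(c-1))).E // (Gcn c (c*n + c*(c-1))).r e ≠ wv c n hc} ⊕
      ({e : (Gcn c (c*n + c*(c-1))).E // (Gcn c (c*n + c*(c-1))).r e = wv c n hc} ×
        Fin (min n 1 + (c-1)))) ≃
    ({e : (K0 c n).E // (K0 c n).s e ≠ Sum.inl ()} ⊕
      ({e : (K0 c n).E // (K0 c n).s e = Sum.inl ()} × Fin c)) where
  toFun x := match x with
    | Sum.inl ⟨Sum.inl j, _⟩ => Sum.inr (⟨Sum.inl j, rfl⟩, ⟨0, by omega⟩)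
    | Sum.inl ⟨Sum.inr t, _⟩ =>
        if h : t.val < c*n then
          Sum.inl ⟨Sum.inr (⟨t.val / n, (Nat.div_lt_iff_lt_mul (npos_of_lt_mul h)).mpr h⟩,
            ⟨t.val % n, Nat.mod_lt _ (npos_of_lt_mul h)⟩), fun hh => by cases hh⟩
        else
          Sum.inr (⟨Sum.inl ⟨(t.val - c*n) % c, Nat.mod_lt _ (by omega)⟩, rfl⟩,
            ⟨(t.val - c*n)/c + 1, divc_lt hc t.isLt h⟩)
    | Sum.inr (⟨e, h⟩, i) => ((by cases h) : False).elim
  invFun y := match y with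
    | Sum.inl ⟨Sum.inl j, h⟩ => (h rfl).elim
    | Sum.inl ⟨Sum.inr (i, t), _⟩ =>
        Sum.inl ⟨Sum.inr ⟨i.val * n + t.val, by
          have := lt_cn_of_pair i.isLt t.isLt; omega⟩, fun hh => by cases hh⟩
    | Sum.inr (⟨Sum.inl j, _⟩, i) =>
        if h : i.val = 0 then Sum.inl ⟨Sum.inl j, fun hh => by cases hh⟩
        else Sum.inl ⟨Sum.inr ⟨c*n + ((i.val - 1)*c + j.val),
          inm_of_block hc i.isLt (by omega) j.isLt⟩, fun hh => by cases hh⟩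
    | Sum.inr (⟨Sum.inr p, h⟩, i) => ((by cases h) : False).elim
  left_inv := by
    rintro (⟨j | t, h⟩ | ⟨⟨e, h⟩, i⟩)
    · dsimp only
      rw [dif_pos rfl]
    · dsimp only
      by_cases h1 : t.val < c*n
      · rw [dif_pos h1]
        dsimp only
        refine congrArg Sum.inl (Subtype.ext (congrArg Sum.inr (Fin.ext ?_)))
        simp only [Fin.val_mk]
        have hd := Nat.div_add_mod t.val n
        have hm : t.val / n * n = n * (t.val / n) := Nat.mul_comm _ _
        omega
      · rw [dif_neg h1]
        dsimp only
        rw [dif_neg (Nat.succ_ne_zero _)]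
        refine congrArg Sum.inl (Subtype.ext (congrArg Sum.inr (Fin.ext ?_)))
        simp only [Fin.val_mk, Nat.add_sub_cancel]
        have hd := Nat.div_add_mod (t.val - c*n) c
        have hm : (t.val - c*n)/c * c = c * ((t.val - c*n)/c) := Nat.mul_comm _ _
        omega
    · exact ((by cases h) : False).elim
  right_inv := by
    rintro (⟨j | ⟨i, t⟩, h⟩ | ⟨⟨j | p, h⟩, i⟩)
    · exact (h rfl).elim
    · dsimp only
      rw [dif_pos (lt_cn_of_pair i.isLt t.isLt)]
      refine congrArg Sum.inl (Subtype.ext (congrArg Sum.inr ?_))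
      have hn : 0 < n := t.pos
      refine Prod.ext (Fin.ext ?_) (Fin.ext ?_) <;> dsimp only
      · simp [Nat.mul_comm i.val n, Nat.mul_add_div hn, Nat.div_eq_of_lt t.isLt]
      · simp [Nat.mul_comm i.val n, Nat.mul_add_mod, Nat.mod_eq_of_lt t.isLt]
    · dsimp only
      by_cases hi : i.val = 0
      · rw [dif_pos hi]
        dsimp only
        refine congrArg Sum.inr (Prod.ext rfl (Fin.ext ?_))
        simp only [Fin.val_mk]
        omega
      · rw [dif_neg hi]
        dsimp only
        rw [dif_neg (by omega)]
        refine congrArg Sum.inr (Prod.ext (Subtype.ext (congrArg Sum.inl (Fin.ext ?_)))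
          (Fin.ext ?_)) <;> dsimp only
        · simp [Nat.add_sub_cancel_left, Nat.mul_comm (i.val - 1) c, Nat.mul_add_mod,
            Nat.mod_eq_of_lt j.isLt]
        · simp only [Nat.add_sub_cancel_left]
          rw [Nat.mul_comm (i.val - 1) c, Nat.mul_add_div (by omega : 0 < c),
            Nat.div_eq_of_lt j.isLt]
          omega
    · exact ((by cases h) : False).elim

lemma iso2 (c n : ℕ) (hc : 2 ≤ c) :
    Iso ((Gcn c (c*n + c*(c-1))).outsplit (wv c n hc) (min n 1 + (c-1)) (Pbig c n hc))
        ((K0 c n).insplit (Sum.inl ()) c (Qp c n (by omega))) := by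
  refine ⟨f2 c n hc, g2 c n hc, ?_, ?_⟩
  · rintro (⟨j | t, h⟩ | ⟨⟨e, h⟩, i⟩)
    · dsimp only [g2, f2, DFunLike.coe, EquivLike.coe]
      simp [outsplit, insplit, Gcn, K0, wv, Pbig, Qp]
    · dsimp only [g2, f2, DFunLike.coe, EquivLike.coe]
      simp [outsplit, insplit, Gcn, K0, wv, Pbig, Qp]
      by_cases ht : t.val < c*n
      · simp [ht, npos_of_lt_mul ht]
      · simp [ht]
        intro h1 h2
        subst h2
        exact absurd h1 (Nat.not_lt_zero _)
    · exact ((by cases h) : False).elim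
  · rintro (⟨j | t, h⟩ | ⟨⟨e, h⟩, i⟩)
    · dsimp only [g2, f2, DFunLike.coe, EquivLike.coe]
      simp [outsplit, insplit, Gcn, K0, wv, Pbig, Qp]
    · dsimp only [g2, f2, DFunLike.coe, EquivLike.coe]
      simp [outsplit, insplit, Gcn, K0, wv, Pbig, Qp]
    · exact ((by cases h) : False).elim

lemma moveO1 (c n : ℕ) (hc : 2 ≤ c) :
    MoveO (Gcn c n) ((Gcn c n).outsplit (Sum.inl ()) c (Pout c n (by omega))) := by
  haveI : Finite (Gcn c n).E := inferInstanceAs (Finite (Fin c ⊕ Fin n))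
  refine ⟨Sum.inl (), c, Pout c n (by omega), ⟨⟨Sum.inl ⟨0, by omega⟩, rfl⟩⟩,
    fun i => ⟨⟨Sum.inl i, rfl⟩, rfl⟩,
    fun i j hi _ => absurd hi (Set.not_infinite.mpr (Set.toFinite _)),
    Iso.refl' _⟩

lemma moveIp1 (c n : ℕ) (hc : 2 ≤ c) :
    MoveIp ((Gcn c n).outsplit (Sum.inl ()) c (Pout c n (by omega)))
      ((K0 c n).insplit (Sum.inl ()) c (Qp c n (by omega))) := by
  haveI : Finite (K0 c n).E := inferInstanceAs (Finite (Fin c ⊕ (Fin c × Fin n)))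
  exact ⟨K0 c n, Sum.inl (), c, Pin c n, Qp c n (by omega),
    ⟨⟨⟨Sum.inl ⟨0, by omega⟩, rfl⟩⟩, inferInstance⟩, by omega,
    iso1 c n (by omega), Iso.refl' _⟩

lemma Pbig_surj (c n : ℕ) (hc : 2 ≤ c) : Function.Surjective (Pbig c n hc) := by
  intro i
  by_cases hi : i.val < min n 1
  · refine ⟨⟨Sum.inr ⟨0, mp_pos n hc⟩, rfl⟩, ?_⟩
    have hn : 0 < n := by omega
    simp only [Pbig]
    rw [if_pos (Nat.mul_pos (by omega) hn)]
    exact Fin.ext (by simp only [Fin.val_mk]; omega)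
  · have hb : (i.val - min n 1)*c ≤ (c-2)*c := Nat.mul_le_mul_right _ (by have := i.isLt; omega)
    have h2 : (c-1)*c = (c-2)*c + c := by
      rw [← Nat.succ_mul]; congr 1; omega
    have hcm : c*(c-1) = (c-1)*c := Nat.mul_comm _ _
    refine ⟨⟨Sum.inr ⟨c*n + (i.val - min n 1)*c, by omega⟩, rfl⟩, ?_⟩
    simp only [Pbig]
    rw [if_neg (by omega)]
    refine Fin.ext ?_
    simp only [Fin.val_mk, Nat.add_sub_cancel_left, Nat.mul_div_cancel _ (show 0 < c by omega)]
    omega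

lemma moveO2 (c n : ℕ) (hc : 2 ≤ c) :
    MoveO (Gcn c (c*n + c*(c-1))) ((K0 c n).insplit (Sum.inl ()) c (Qp c n (by omega))) := by
  haveI : Finite (Gcn c (c*n + c*(c-1))).E :=
    inferInstanceAs (Finite (Fin c ⊕ Fin (c*n + c*(c-1))))
  exact ⟨wv c n hc, min n 1 + (c-1), Pbig c n hc, ⟨⟨Sum.inr ⟨0, mp_pos n hc⟩, rfl⟩⟩,
    Pbig_surj c n hc,
    fun i j hi _ => absurd hi (Set.not_infinite.mpr (Set.toFinite _)),
    iso2 c n hc⟩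

lemma step (c n : ℕ) (hc : 2 ≤ c) :
    Relation.ReflTransGen
      (fun A B => (MoveO A B ∨ MoveIp A B) ∨ (MoveO B A ∨ MoveIp B A))
      (Gcn c n) (Gcn c (c*n + c*(c-1))) := by
  refine Relation.ReflTransGen.head (Or.inl (Or.inl (moveO1 c n hc)))
    (Relation.ReflTransGen.head (Or.inl (Or.inr (moveIp1 c n hc)))
      (Relation.ReflTransGen.single (Or.inr (Or.inl (moveO2 c n hc)))))

/-- Let `c ≥ 2` and `n, m ≥ 0` with `(c+m)/(c+n)` an integer
power of `c`.  Then `G(c,n)` and `G(c,m)` are move equivalent via the moves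
(O) and (I+). -/
theorem Gcn_moveEquiv_of_pow (c n m : ℕ) (hc : 2 ≤ c)
    (hpow : (∃ k : ℕ, c + m = c ^ k * (c + n)) ∨
            (∃ k : ℕ, c + n = c ^ k * (c + m))) :
    MoveEquiv (fun A B => MoveO A B ∨ MoveIp A B) (Gcn c n) (Gcn c m) := by
  have main : ∀ (k a b : ℕ), c + b = c ^ k * (c + a) →
      Relation.ReflTransGen
        (fun A B => (MoveO A B ∨ MoveIp A B) ∨ (MoveO B A ∨ MoveIp B A))
        (Gcn c a) (Gcn c b) := by
    intro k
    induction k with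
    | zero =>
      intro a b h
      rw [pow_zero, one_mul] at h
      obtain rfl : a = b := by omega
      exact Relation.ReflTransGen.refl
    | succ k ih =>
      intro a b h
      have e1 : c ^ (k+1) * (c + a) = c ^ k * (c * (c + a)) := by ring
      have e2 : c * (c + a) = c + (c*a + c*(c-1)) := by
        have hcc : c*(c-1) + c = c*c := by
          rw [← Nat.mul_succ]; congr 1; omega
        have e3 : c * (c + a) = c*c + c*a := by ring
        omega
      exact (step c a hc).trans (ih (c*a + c*(c-1)) b (by rw [h, e1, e2]))
  rcases hpow with ⟨k, hk⟩ | ⟨k, hk⟩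
  · exact ⟨Gcn c m, main k n m hk, Iso.refl' _⟩
  · exact ⟨Gcn c m,
      (@Relation.ReflTransGen.stdSymm _ _ ⟨fun _ _ h => Or.symm h⟩).symm _ _ (main k m n hk),
      Iso.refl' _⟩
end
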